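/- Let A be a bounded invertible positive operator with A ≥ ε > 0, and Λ a bounded operator such that [A, Λ] is trace class. Then [A^{-1}, Λ] and [A^{-1/2}, Λ] are trace class. -/

import Mathlib

/-!
Trace-class operators form a two-sided ideal: writing `x` as a combination of four unitaries
with coefficients of norm at most `‖x‖ / 2` bounds the trace norms of `xT` and `Tx` by `2 ‖x‖`
times that of `T`. Hence `[A⁻¹, Λ] = -A⁻¹ [A, Λ] A⁻¹` is trace class, and by the same identity
it suffices for `A^{-1/2}` to show that `Y = [B, Λ]` is trace class, where `B = √A` is strictly
positive. Since `[A, Λ] = BY + YB`, putting `μ = ‖B‖`, `P = (B + μ)⁻¹` and `Q = B - μ` turns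
this into the fixed-point equation `Y = P [A, Λ] - P Y Q`. If `B ≥ m > 0` then
`‖P‖ ‖Q‖ ≤ (μ - m) / (μ + m) < 1`, so `Y = ∑ₖ (-P)ᵏ P [A, Λ] Qᵏ`, a series whose trace norms
decay geometrically.
-/

open scoped ENNReal InnerProductSpace
set_option synthInstance.maxHeartbeats 1000000
set_option maxHeartbeats 1000000

/-- The trace norm, defined as the supremum over pairs of finite orthonormal systems. -/
noncomputable def traceNorm {H : Type*} [NormedAddCommGroup H] [InnerProductSpace ℂ H]
    (T : H → H) : ℝ≥0∞ :=
  ⨆ (n : ℕ) (e : Fin n → H) (f : Fin n → H) (_ : Orthonormal ℂ e) (_ : Orthonormal ℂ f),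
    ∑ i, ENNReal.ofReal ‖(inner ℂ (e i) (T (f i)) : ℂ)‖

/-- `T` is trace class iff its trace norm is finite. -/
def IsTraceClass {H : Type*} [NormedAddCommGroup H] [InnerProductSpace ℂ H]
    (T : H → H) : Prop :=
  traceNorm T ≠ ⊤

section TraceNorm

variable {H : Type*} [NormedAddCommGroup H] [InnerProductSpace ℂ H]

lemma sum_enorm_inner_le_traceNorm (T : H → H) {n : ℕ} {e f : Fin n → H}
    (he : Orthonormal ℂ e) (hf : Orthonormal ℂ f) :
    ∑ i, ‖⟪e i, T (f i)⟫_ℂ‖ₑ ≤ traceNorm T := by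
  simp only [← ofReal_norm]
  exact le_iSup_of_le n <| le_iSup_of_le e <| le_iSup_of_le f <| le_iSup_of_le he <|
    le_iSup_of_le hf le_rfl

lemma traceNorm_le {T : H → H} {C : ℝ≥0∞}
    (h : ∀ (n : ℕ) (e f : Fin n → H), Orthonormal ℂ e → Orthonormal ℂ f →
      ∑ i, ‖⟪e i, T (f i)⟫_ℂ‖ₑ ≤ C) :
    traceNorm T ≤ C := by
  refine iSup_le fun n => iSup_le fun e => iSup_le fun f => iSup_le fun he => iSup_le fun hf => ?_
  simpa only [ofReal_norm] using h n e f he hf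

@[simp]
lemma traceNorm_zero : traceNorm (0 : H → H) = 0 :=
  nonpos_iff_eq_zero.mp <| traceNorm_le fun _ _ _ _ _ => by simp

lemma traceNorm_of_subsingleton [Subsingleton H] (T : H → H) : traceNorm T = 0 := by
  rw [Subsingleton.elim T 0, traceNorm_zero]

lemma traceNorm_add_le (T S : H → H) : traceNorm (T + S) ≤ traceNorm T + traceNorm S :=
  traceNorm_le fun _ e f he hf => calc
    ∑ i, ‖⟪e i, (T + S) (f i)⟫_ℂ‖ₑ ≤ ∑ i, (‖⟪e i, T (f i)⟫_ℂ‖ₑ + ‖⟪e i, S (f i)⟫_ℂ‖ₑ) :=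
      Finset.sum_le_sum fun i _ => by rw [Pi.add_apply, inner_add_right]; exact enorm_add_le _ _
    _ ≤ traceNorm T + traceNorm S := by
      rw [Finset.sum_add_distrib]
      exact add_le_add (sum_enorm_inner_le_traceNorm T he hf) (sum_enorm_inner_le_traceNorm S he hf)

lemma traceNorm_smul_le (c : ℂ) (T : H → H) : traceNorm (c • T) ≤ ‖c‖ₑ * traceNorm T :=
  traceNorm_le fun _ e f he hf => by
    simp only [Pi.smul_apply, inner_smul_right, enorm_mul, ← Finset.mul_sum]
    exact mul_le_mul_right (sum_enorm_inner_le_traceNorm T he hf) _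

lemma traceNorm_neg (T : H → H) : traceNorm (-T) = traceNorm T := by
  simp only [traceNorm, Pi.neg_apply, inner_neg_right, norm_neg]

lemma traceNorm_comp_linearIsometryEquiv_le (T : H → H) (U : H ≃ₗᵢ[ℂ] H) :
    traceNorm (T ∘ U) ≤ traceNorm T :=
  traceNorm_le fun _ _ _ he hf =>
    sum_enorm_inner_le_traceNorm T he (hf.comp_linearIsometryEquiv U)

lemma traceNorm_linearIsometryEquiv_comp_le (U : H ≃ₗᵢ[ℂ] H) (T : H → H) :
    traceNorm (U ∘ T) ≤ traceNorm T :=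
  traceNorm_le fun _ e _ he hf => by
    refine le_of_eq_of_le (Finset.sum_congr rfl fun i _ => ?_)
      (sum_enorm_inner_le_traceNorm T (he.comp_linearIsometryEquiv U.symm) hf)
    rw [Function.comp_apply, Function.comp_apply, ← U.inner_map_map (U.symm (e i)),
      U.apply_symm_apply]

lemma traceNorm_le_tsum_of_hasSum {T : ℕ → H →L[ℂ] H} {S : H →L[ℂ] H} (hS : HasSum T S) :
    traceNorm ⇑S ≤ ∑' k, traceNorm ⇑(T k) :=
  traceNorm_le fun _ e f he hf => calc
    ∑ i, ‖⟪e i, S (f i)⟫_ℂ‖ₑ ≤ ∑ i, ∑' k, ‖⟪e i, T k (f i)⟫_ℂ‖ₑ :=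
      Finset.sum_le_sum fun i _ => by
        have h := ((hS.mapL (ContinuousLinearMap.apply ℂ H (f i))).mapL (innerSL ℂ (e i))).tsum_eq
        simp only [innerSL_apply_apply, ContinuousLinearMap.apply_apply] at h
        exact h ▸ enorm_tsum_le_tsum_enorm
    _ = ∑' k, ∑ i, ‖⟪e i, T k (f i)⟫_ℂ‖ₑ :=
      (Summable.tsum_finsetSum fun _ _ => ENNReal.summable).symm
    _ ≤ ∑' k, traceNorm ⇑(T k) := ENNReal.tsum_le_tsum fun k => sum_enorm_inner_le_traceNorm _ he hf

end TraceNorm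

section Ideal

variable {H : Type*} [NormedAddCommGroup H] [InnerProductSpace ℂ H] [CompleteSpace H]

lemma traceNorm_map_le_of_forall_unitary (L : (H →L[ℂ] H) →ₗ[ℂ] (H →L[ℂ] H)) {C : ℝ≥0∞}
    (hL : ∀ u : unitary (H →L[ℂ] H), traceNorm ⇑(L u) ≤ C) (x : H →L[ℂ] H) :
    traceNorm ⇑(L x) ≤ 2 * ‖x‖ₑ * C := by
  obtain ⟨u, c, hx, hc⟩ := CStarAlgebra.exists_sum_four_unitary x
  have hc' : ∀ i, ‖c i‖ₑ ≤ ‖x‖ₑ / 2 := fun i => by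
    rw [← ofReal_norm, ← ofReal_norm, ← ENNReal.ofReal_ofNat 2,
      ← ENNReal.ofReal_div_of_pos two_pos]
    exact ENNReal.ofReal_le_ofReal (hc i)
  calc traceNorm ⇑(L x) = traceNorm (∑ i, c i • ⇑(L (u i))) := by
        simp only [hx, map_sum, map_smul, FunLike.coe_sum, FunLike.coe_smul]
    _ ≤ ∑ i, traceNorm (c i • ⇑(L (u i))) :=
        Finset.le_sum_of_subadditive _ traceNorm_zero.le traceNorm_add_le _ _
    _ ≤ ∑ _i : Fin 4, ‖x‖ₑ / 2 * C :=
        Finset.sum_le_sum fun i _ => (traceNorm_smul_le _ _).trans (mul_le_mul' (hc' i) (hL _))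
    _ = 2 * ‖x‖ₑ * C := by
        rw [Finset.sum_const, Finset.card_fin, nsmul_eq_mul, ← mul_assoc,
          show ((4 : ℕ) : ℝ≥0∞) = 2 * 2 by norm_num, mul_assoc 2,
          ENNReal.mul_div_cancel two_ne_zero ENNReal.ofNat_ne_top]

lemma traceNorm_mul_le_left (x T : H →L[ℂ] H) :
    traceNorm ⇑(x * T) ≤ 2 * ‖x‖ₑ * traceNorm ⇑T :=
  traceNorm_map_le_of_forall_unitary (LinearMap.mulRight ℂ T)
    (fun u => traceNorm_linearIsometryEquiv_comp_le (Unitary.linearIsometryEquiv u) T) x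

lemma traceNorm_mul_le_right (T x : H →L[ℂ] H) :
    traceNorm ⇑(T * x) ≤ 2 * ‖x‖ₑ * traceNorm ⇑T :=
  traceNorm_map_le_of_forall_unitary (LinearMap.mulLeft ℂ T)
    (fun u => traceNorm_comp_linearIsometryEquiv_le T (Unitary.linearIsometryEquiv u)) x

end Ideal

lemma ringInverse_mul_sub_mul_ringInverse {R : Type*} [Ring R] {a : R} (ha : IsUnit a) (b : R) :
    Ring.inverse a * b - b * Ring.inverse a =
      -(Ring.inverse a * (a * b - b * a) * Ring.inverse a) := by
  have h₁ : Ring.inverse a * a = 1 := Ring.inverse_mul_cancel a ha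
  have h₂ : a * Ring.inverse a = 1 := Ring.mul_inverse_cancel a ha
  calc Ring.inverse a * b - b * Ring.inverse a
      = Ring.inverse a * b * (a * Ring.inverse a) - (Ring.inverse a * a) * b * Ring.inverse a := by
        rw [h₁, h₂, mul_one, one_mul]
    _ = _ := by noncomm_ring

section SylvesterSeries

variable {R : Type*} [NormedRing R]

lemma norm_pow_mul_mul_pow_le (P Z Q : R) (n : ℕ) :
    ‖P ^ n * Z * Q ^ n‖ ≤ (‖P‖ * ‖Q‖) ^ n * ‖Z‖ := by
  induction n with
  | zero => simp
  | succ n ih =>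
    calc ‖P ^ (n + 1) * Z * Q ^ (n + 1)‖ = ‖P * (P ^ n * Z * Q ^ n) * Q‖ := by
          rw [pow_succ' P, pow_succ Q]; noncomm_ring
      _ ≤ ‖P‖ * ‖P ^ n * Z * Q ^ n‖ * ‖Q‖ := norm_mul₃_le
      _ ≤ ‖P‖ * ((‖P‖ * ‖Q‖) ^ n * ‖Z‖) * ‖Q‖ := by gcongr
      _ = (‖P‖ * ‖Q‖) ^ (n + 1) * ‖Z‖ := by ring

lemma hasSum_pow_mul_mul_pow_of_eq [CompleteSpace R] {P Q Y Z : R} (hPQ : ‖P‖ * ‖Q‖ < 1)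
    (hY : Y = Z + P * Y * Q) : HasSum (fun k => P ^ k * Z * Q ^ k) Y := by
  have hZ : Z = Y - P * Y * Q := eq_sub_of_add_eq hY.symm
  have hpartial : ∀ n, ∑ k ∈ Finset.range n, P ^ k * Z * Q ^ k = Y - P ^ n * Y * Q ^ n := by
    intro n
    induction n with
    | zero => simp
    | succ n ih => rw [Finset.sum_range_succ, ih, hZ, pow_succ P, pow_succ' Q]; noncomm_ring
  have hsum : Summable fun k => ‖P ^ k * Z * Q ^ k‖ :=
    ((summable_geometric_of_lt_one (by positivity) hPQ).mul_right ‖Z‖).of_nonneg_of_le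
      (fun _ => norm_nonneg _) (norm_pow_mul_mul_pow_le P Z Q)
  rw [hasSum_iff_tendsto_nat_of_summable_norm hsum]
  simp only [hpartial]
  have hrem : Filter.Tendsto (fun n => P ^ n * Y * Q ^ n) Filter.atTop (nhds 0) :=
    squeeze_zero_norm (norm_pow_mul_mul_pow_le P Y Q)
      (by simpa using (tendsto_pow_atTop_nhds_zero_of_lt_one (by positivity) hPQ).mul_const ‖Y‖)
  simpa using tendsto_const_nhds.sub hrem

end SylvesterSeries

section Contraction

variable {A : Type*} [CStarAlgebra A] [PartialOrder A] [StarOrderedRing A] [Nontrivial A]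

lemma IsStrictlyPositive.exists_pos_forall_spectrum_mem_Icc {B : A}
    (hB : IsStrictlyPositive B) : ∃ m > 0, ∀ x ∈ spectrum ℝ B, x ∈ Set.Icc m ‖B‖ := by
  obtain ⟨m, hm, hmB⟩ := (CFC.exists_pos_algebraMap_le_iff hB.isSelfAdjoint).2
    fun x hx => hB.spectrum_pos hx
  exact ⟨m, hm, fun x hx => ⟨(algebraMap_le_iff_le_spectrum hB.isSelfAdjoint).1 hmB x hx,
    (Real.le_norm_self x).trans (spectrum.norm_le_norm_of_mem hx)⟩⟩

lemma IsStrictlyPositive.exists_mul_add_eq_one_and_norm_mul_lt_one {B : A}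
    (hB : IsStrictlyPositive B) :
    ∃ (P : A) (μ : ℝ), P * (B + algebraMap ℝ A μ) = 1 ∧ ‖P‖ * ‖B - algebraMap ℝ A μ‖ < 1 := by
  obtain ⟨m, hm, hspec⟩ := hB.exists_pos_forall_spectrum_mem_Icc
  set μ := ‖B‖
  have hmμ : m ≤ μ := by
    obtain ⟨x, hx⟩ := ContinuousFunctionalCalculus.spectrum_nonempty (R := ℝ) B hB.isSelfAdjoint
    exact (hspec x hx).1.trans (hspec x hx).2
  have hpos : ∀ x ∈ spectrum ℝ B, 0 < x + μ := fun x hx => by linarith [(hspec x hx).1]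
  have hcont : ContinuousOn (fun x : ℝ => (x + μ)⁻¹) (spectrum ℝ B) :=
    (continuousOn_id.add continuousOn_const).inv₀ fun x hx => (hpos x hx).ne'
  refine ⟨cfc (fun x : ℝ => (x + μ)⁻¹) B, μ, ?_, ?_⟩
  · have hW : B + algebraMap ℝ A μ = cfc (fun x => x + μ) B := by
      rw [cfc_add_const μ (fun x => x) B, cfc_id' ℝ B]
    rw [hW, ← cfc_mul _ _ B hcont,
      cfc_congr (g := fun _ => 1) fun x hx => inv_mul_cancel₀ (hpos x hx).ne', cfc_const_one ℝ B]
  have hP : ‖cfc (fun x : ℝ => (x + μ)⁻¹) B‖ ≤ (m + μ)⁻¹ :=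
    norm_cfc_le (by positivity) fun x hx => by
      rw [Real.norm_of_nonneg (inv_pos.2 (hpos x hx)).le]
      exact inv_anti₀ (by positivity) (by linarith [(hspec x hx).1])
  have hQ : ‖B - algebraMap ℝ A μ‖ ≤ μ - m := by
    rw [sub_eq_add_neg, ← map_neg, ← cfc_id' ℝ B, ← cfc_add_const (-μ) (fun x => x) B]
    refine norm_cfc_le (by linarith) fun x hx => ?_
    rw [Real.norm_eq_abs, abs_le]
    constructor <;> linarith [(hspec x hx).1, (hspec x hx).2]
  calc ‖cfc (fun x : ℝ => (x + μ)⁻¹) B‖ * ‖B - algebraMap ℝ A μ‖ ≤ (m + μ)⁻¹ * (μ - m) :=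
        mul_le_mul hP hQ (norm_nonneg _) (by positivity)
    _ < 1 := by rw [inv_mul_lt_iff₀ (by positivity)]; linarith

end Contraction

namespace IsTraceClass

variable {H : Type*} [NormedAddCommGroup H] [InnerProductSpace ℂ H]

lemma of_subsingleton [Subsingleton H] (T : H → H) : IsTraceClass T := by
  simp [IsTraceClass, traceNorm_of_subsingleton]

lemma neg {T : H → H} (hT : IsTraceClass T) : IsTraceClass (-T) := by
  rwa [IsTraceClass, traceNorm_neg]

variable [CompleteSpace H]

lemma mul_left (x : H →L[ℂ] H) {T : H →L[ℂ] H} (hT : IsTraceClass ⇑T) :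
    IsTraceClass ⇑(x * T) :=
  ne_top_of_le_ne_top (by finiteness) (traceNorm_mul_le_left x T)

lemma mul_right {T : H →L[ℂ] H} (hT : IsTraceClass ⇑T) (x : H →L[ℂ] H) :
    IsTraceClass ⇑(T * x) :=
  ne_top_of_le_ne_top (by finiteness) (traceNorm_mul_le_right T x)

lemma commutator_ringInverse {a Λ : H →L[ℂ] H} (ha : IsUnit a)
    (h : IsTraceClass ⇑(a * Λ - Λ * a)) :
    IsTraceClass ⇑(Ring.inverse a * Λ - Λ * Ring.inverse a) := by
  rw [ringInverse_mul_sub_mul_ringInverse ha, FunLike.coe_neg]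
  exact ((h.mul_left _).mul_right _).neg

lemma of_hasSum_pow_mul_mul_pow [Nontrivial H] {P Q Z Y : H →L[ℂ] H} (hPQ : ‖P‖ * ‖Q‖ < 1)
    (hZ : IsTraceClass ⇑Z) (hY : HasSum (fun k => P ^ k * Z * Q ^ k) Y) : IsTraceClass ⇑Y := by
  have hr : ‖P‖ₑ * ‖Q‖ₑ < 1 := by
    rwa [← ofReal_norm, ← ofReal_norm, ← ENNReal.ofReal_mul (norm_nonneg _),
      ENNReal.ofReal_lt_one]
  have hpow : ∀ (S : H →L[ℂ] H) k, ‖S ^ k‖ₑ ≤ ‖S‖ₑ ^ k := fun S k => by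
    simpa only [enorm_eq_nnnorm, ← ENNReal.coe_pow] using ENNReal.coe_le_coe.2 (nnnorm_pow_le S k)
  have hterm : ∀ k, traceNorm ⇑(P ^ k * Z * Q ^ k) ≤ 4 * traceNorm ⇑Z * (‖P‖ₑ * ‖Q‖ₑ) ^ k :=
    fun k => calc
      traceNorm ⇑(P ^ k * Z * Q ^ k) ≤ 2 * ‖Q ^ k‖ₑ * (2 * ‖P ^ k‖ₑ * traceNorm ⇑Z) :=
        (traceNorm_mul_le_right _ _).trans (by gcongr; exact traceNorm_mul_le_left _ _)
      _ ≤ 2 * ‖Q‖ₑ ^ k * (2 * ‖P‖ₑ ^ k * traceNorm ⇑Z) := by gcongr <;> exact hpow _ _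
      _ = 4 * traceNorm ⇑Z * (‖P‖ₑ * ‖Q‖ₑ) ^ k := by rw [mul_pow]; ring
  refine ne_top_of_le_ne_top ?_
    ((traceNorm_le_tsum_of_hasSum hY).trans (ENNReal.tsum_le_tsum hterm))
  rw [ENNReal.tsum_mul_left, ENNReal.tsum_geometric]
  exact ENNReal.mul_ne_top (by finiteness) (ENNReal.inv_ne_top.2 (tsub_pos_of_lt hr).ne')

lemma of_anticommutator {B Y : H →L[ℂ] H} (hB : IsStrictlyPositive B)
    (hT : IsTraceClass ⇑(B * Y + Y * B)) : IsTraceClass ⇑Y := by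
  rcases subsingleton_or_nontrivial H with _ | _
  · exact of_subsingleton _
  obtain ⟨P, μ, hPW, hPQ⟩ := hB.exists_mul_add_eq_one_and_norm_mul_lt_one
  have hY : Y = P * (B * Y + Y * B) + (-P) * Y * (B - algebraMap ℝ (H →L[ℂ] H) μ) := calc
    Y = P * (B + algebraMap ℝ (H →L[ℂ] H) μ) * Y := by rw [hPW, one_mul]
    _ = P * (B * Y + Y * algebraMap ℝ (H →L[ℂ] H) μ) := by
      rw [mul_assoc, add_mul, Algebra.commutes]
    _ = _ := by noncomm_ring
  rw [← norm_neg P] at hPQ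
  exact of_hasSum_pow_mul_mul_pow hPQ (hT.mul_left P) (hasSum_pow_mul_mul_pow_of_eq hPQ hY)

end IsTraceClass

lemma algebraMap_le_of_forall_le_re_inner {H : Type*} [NormedAddCommGroup H]
    [InnerProductSpace ℂ H] [CompleteSpace H] {A : H →L[ℂ] H} (hA : IsSelfAdjoint A) {c : ℝ}
    (h : ∀ ψ : H, c * ‖ψ‖ ^ 2 ≤ (⟪ψ, A ψ⟫_ℂ).re) : algebraMap ℝ (H →L[ℂ] H) c ≤ A := by
  rw [ContinuousLinearMap.le_def, ContinuousLinearMap.isPositive_def']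
  refine ⟨hA.sub (.algebraMap _ (.all c)), fun ψ => ?_⟩
  rw [ContinuousLinearMap.reApplyInnerSelf, sub_apply, inner_sub_left, map_sub,
    Algebra.algebraMap_eq_smul_one, smul_apply, one_apply_eq_self, ← Complex.coe_smul,
    inner_smul_left, inner_self_eq_norm_sq_to_K, inner_re_symm]
  simpa [← Complex.ofReal_pow] using h ψ

/-- Let `A` be a bounded invertible positive operator with `A ≥ ε > 0` and `Λ` bounded with
`[A, Λ]` trace class.  Then `[A⁻¹, Λ]` and `[A^{-1/2}, Λ]` are trace class. -/
theorem commutator_inverse_traceClass {H : Type*} [NormedAddCommGroup H]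
    [InnerProductSpace ℂ H] [CompleteSpace H]
    (A Λ : H →L[ℂ] H) (hA : IsSelfAdjoint A) (ε : ℝ) (hε : 0 < ε)
    (hpos : ∀ ψ : H, ε * ‖ψ‖ ^ 2 ≤ (inner ℂ ψ (A ψ) : ℂ).re)
    (hcomm : IsTraceClass (fun ψ => (A ∘L Λ - Λ ∘L A) ψ)) :
    IsTraceClass (fun ψ => (Ring.inverse A ∘L Λ - Λ ∘L Ring.inverse A) ψ) ∧
      IsTraceClass (fun ψ =>
        (Ring.inverse (CFC.sqrt A) ∘L Λ - Λ ∘L Ring.inverse (CFC.sqrt A)) ψ) := by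
  have hA_pos : IsStrictlyPositive A :=
    (isStrictlyPositive_algebraMap hε).of_le (algebraMap_le_of_forall_le_re_inner hA hpos)
  have hsqrt : IsTraceClass ⇑(CFC.sqrt A * Λ - Λ * CFC.sqrt A) := by
    refine IsTraceClass.of_anticommutator (hA_pos.sqrt A) ?_
    have hsq : CFC.sqrt A * (CFC.sqrt A * Λ - Λ * CFC.sqrt A)
        + (CFC.sqrt A * Λ - Λ * CFC.sqrt A) * CFC.sqrt A = A * Λ - Λ * A := by
      conv_rhs => rw [← CFC.sqrt_mul_sqrt_self A hA_pos.nonneg]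
      noncomm_ring
    rwa [hsq]
  exact ⟨hcomm.commutator_ringInverse hA_pos.isUnit,
    hsqrt.commutator_ringInverse (hA_pos.sqrt A).isUnit⟩
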